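/- Let Z be a topological space, p : X → Z and q : Y → Z continuous maps admitting continuous sections s_X : Z → X (with p ∘ s_X = id) and s_Y : Z → Y (with q ∘ s_Y = id). Assume that for every z ∈ Z the fibers p⁻¹(z) and q⁻¹(z) are path-connected, and that Z is path-connected. Then the pullback { (x, y) ∈ X × Y : p(x) = q(y) } is path-connected. -/

import Mathlib

/-!
Every point `(x, y)` of the pullback lies in the product of fibres `p⁻¹{z} ×ˢ q⁻¹{z}` over
`z = p x`, which is path-connected and contains the point `(sX z, sY z)` of the diagonal
section. The image of that section is path-connected because `Z` is, so every point of the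
pullback is joined to a single path-connected subset of it.
-/

open Set

theorem IsPathConnected.of_forall_joinedIn {X : Type*} [TopologicalSpace X] {A S : Set X}
    (hA : IsPathConnected A) (hAS : A ⊆ S) (hS : ∀ x ∈ S, ∃ a ∈ A, JoinedIn S x a) :
    IsPathConnected S := by
  obtain ⟨a₀, ha₀, hjoin⟩ := hA
  refine ⟨a₀, hAS ha₀, fun {x} hx => ?_⟩
  obtain ⟨a, ha, hxa⟩ := hS x hx
  exact ((hjoin ha).mono hAS).trans hxa.symm

section Pullback

variable {X Y Z : Type*} {p : X → Z} {q : Y → Z}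

theorem prod_preimage_singleton_subset_pullback (z : Z) :
    (p ⁻¹' {z}) ×ˢ (q ⁻¹' {z}) ⊆ {xy : X × Y | p xy.1 = q xy.2} :=
  fun _ ⟨hx, hy⟩ => hx.trans hy.symm

theorem range_prodMk_subset_pullback {sX : Z → X} {sY : Z → Y}
    (hpsX : ∀ z, p (sX z) = z) (hqsY : ∀ z, q (sY z) = z) :
    range (fun z => (sX z, sY z)) ⊆ {xy : X × Y | p xy.1 = q xy.2} := by
  rintro _ ⟨z, rfl⟩
  exact (hpsX z).trans (hqsY z).symm

end Pullback

theorem stmt15_general {X Y Z : Type*} [TopologicalSpace X] [TopologicalSpace Y]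
    [TopologicalSpace Z]
    (p : X → Z) (q : Y → Z)
    (sX : Z → X) (sY : Z → Y) (hsX : Continuous sX) (hsY : Continuous sY)
    (hpsX : ∀ z, p (sX z) = z) (hqsY : ∀ z, q (sY z) = z)
    (hfibp : ∀ z, IsPathConnected (p ⁻¹' {z}))
    (hfibq : ∀ z, IsPathConnected (q ⁻¹' {z}))
    [PathConnectedSpace Z] :
    IsPathConnected {xy : X × Y | p xy.1 = q xy.2} := by
  refine (isPathConnected_range (hsX.prodMk hsY)).of_forall_joinedIn
    (range_prodMk_subset_pullback hpsX hqsY) ?_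
  rintro ⟨x, y⟩ (hxy : p x = q y)
  have hfib : IsPathConnected ((p ⁻¹' {p x}) ×ˢ (q ⁻¹' {p x})) := (hfibp _).prod (hfibq _)
  refine ⟨(sX (p x), sY (p x)), mem_range_self _, ?_⟩
  exact (hfib.joinedIn (x, y) ⟨rfl, hxy.symm⟩ (sX (p x), sY (p x)) ⟨hpsX _, hqsY _⟩).mono
    (prod_preimage_singleton_subset_pullback _)

/-- If `p : X → Z` and `q : Y → Z` are continuous maps admitting continuous sections,
all fibers of `p` and `q` are path-connected, and `Z` is path-connected, then the
pullback `{(x,y) | p x = q y}` is path-connected. -/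
theorem stmt15 {X Y Z : Type*} [TopologicalSpace X] [TopologicalSpace Y]
    [TopologicalSpace Z]
    (p : X → Z) (q : Y → Z) (hp : Continuous p) (hq : Continuous q)
    (sX : Z → X) (sY : Z → Y) (hsX : Continuous sX) (hsY : Continuous sY)
    (hpsX : ∀ z, p (sX z) = z) (hqsY : ∀ z, q (sY z) = z)
    (hfibp : ∀ z, IsPathConnected (p ⁻¹' {z}))
    (hfibq : ∀ z, IsPathConnected (q ⁻¹' {z}))
    [PathConnectedSpace Z] :
    IsPathConnected {xy : X × Y | p xy.1 = q xy.2} :=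
  stmt15_general p q sX sY hsX hsY hpsX hqsY hfibp hfibq
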